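/- arXiv:2502.02006 — 3 statements merged into one kernel-verified Lean document; each statement's English description precedes it below -/
import Mathlib

section
/- The Hilbert transform of the semicircular kernel k(x) = (1/(2π))√((4−x²)₊) is K(x) = (1/(2π))(−x + sign(x)·√((x²−4)₊)); that is, for every real x, p.v. (1/π) ∫ k(t)/(t−x) dt = (1/(2π))(−x + sign(x)·√((x²−4)₊)). -/
open MeasureTheory Filter Set

/-- The semicircular kernel `k(x) = (1/(2π))√((4−x²)₊)`. -/
noncomputable def semicircK (x : ℝ) : ℝ := (1 / (2 * Real.pi)) * Real.sqrt (max (4 - x ^ 2) 0)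

/-- Its claimed Hilbert transform `K(x) = (1/(2π))(−x + sign(x)√((x²−4)₊))`. -/
noncomputable def semicircHK (x : ℝ) : ℝ :=
  (1 / (2 * Real.pi)) * (-x + Real.sign x * Real.sqrt (max (x ^ 2 - 4) 0))

/-!
On `[-2, 2]` write `√(4 - t²) / (t - x) = -(t + x) / √(4 - t²) + (4 - x²) / ((t - x) √(4 - t²))`.
The first term has the primitive `√(4 - t²) - x arcsin (t / 2)`, which contributes `-π x`.
For `|x| < 2` the second term has the primitive
`√(4 - x²) (log |t - x| - log (4 - x t + √(4 - x²) √(4 - t²)))`: its logarithmic singularity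
cancels symmetrically in the principal value, and it takes the same value at `±2`.
For `x > 2` it has the primitive `-√(x² - 4) arcsin ((4 - x t) / (2 (x - t)))`, which contributes
`π √(x² - 4)`, and for `x = 2` it vanishes. Negative `x` follow since `k` is even.
-/

open Real Topology

noncomputable def truncatedHilbert (f : ℝ → ℝ) (x ε : ℝ) : ℝ :=
  (1 / π) * ∫ t in {t | ε < |t - x|}, f t / (t - x)

theorem truncatedHilbert_neg {f : ℝ → ℝ} (hf : ∀ t, f (-t) = f t) (x ε : ℝ) :
    truncatedHilbert f (-x) ε = -truncatedHilbert f x ε := by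
  have hpre : Neg.neg ⁻¹' {t : ℝ | ε < |t - -x|} = {t | ε < |t - x|} := by
    ext t
    simp only [mem_preimage, mem_ofPred_eq, ← abs_neg (-t - -x)]
    ring_nf
  unfold truncatedHilbert
  rw [← (Measure.measurePreserving_neg volume).setIntegral_preimage_emb measurableEmbedding_neg,
    hpre, ← mul_neg, ← integral_neg]
  congr 1
  refine setIntegral_congr_fun (measurableSet_lt measurable_const (by fun_prop)) fun t _ => ?_
  rw [hf, show -t - -x = -(t - x) by ring, div_neg]

section PrincipalValue

variable {g F Φ : ℝ → ℝ} {a b x : ℝ}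

theorem setIntegral_eq_sub_of_hasDerivAt {s : Set ℝ} (hab : a ≤ b) (hs₁ : Ioo a b ⊆ s)
    (hs₂ : s ⊆ Icc a b) (hg : ContinuousOn g (Icc a b)) (hF : ContinuousOn F (Icc a b))
    (hderiv : ∀ t ∈ Ioo a b, HasDerivAt F (g t) t) :
    ∫ t in s, g t = F b - F a := by
  have hs : s =ᵐ[volume] Ioo a b :=
    (hs₂.eventuallyLE.trans Ioo_ae_eq_Icc.symm.le).antisymm hs₁.eventuallyLE
  rw [setIntegral_congr_set hs, ← integral_Ioc_eq_integral_Ioo,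
    ← intervalIntegral.integral_of_le hab]
  exact intervalIntegral.integral_eq_sub_of_hasDerivAt_of_le hab hF hderiv
    (hg.intervalIntegrable_of_Icc hab)

theorem tendsto_sub_nhdsGT (x : ℝ) : Tendsto (fun ε => x - ε) (𝓝[>] 0) (𝓝 x) :=
  tendsto_nhdsWithin_of_tendsto_nhds (by simpa using (continuous_sub_left x).tendsto 0)

theorem tendsto_add_nhdsGT (x : ℝ) : Tendsto (fun ε => x + ε) (𝓝[>] 0) (𝓝 x) :=
  tendsto_nhdsWithin_of_tendsto_nhds (by simpa using (continuous_const_add x).tendsto 0)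

theorem setOf_lt_abs_sub_inter_Icc {ε : ℝ} (hε : 0 ≤ ε) (hax : a ≤ x) (hxb : x ≤ b) :
    {t | ε < |t - x|} ∩ Icc a b = Ico a (x - ε) ∪ Ioc (x + ε) b := by
  ext t
  simp only [mem_inter_iff, mem_ofPred_eq, mem_Icc, mem_union, mem_Ico, mem_Ioc, lt_abs]
  constructor
  · rintro ⟨h | h, h₁, h₂⟩
    · exact Or.inr ⟨by linarith, h₂⟩
    · exact Or.inl ⟨h₁, by linarith⟩
  · rintro (⟨h₁, h₂⟩ | ⟨h₁, h₂⟩)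
    · exact ⟨Or.inr (by linarith), h₁, by linarith⟩
    · exact ⟨Or.inl (by linarith), by linarith, h₂⟩

theorem tendsto_setIntegral_abs_sub_gt_of_log_singularity {c : ℝ} (hax : a < x) (hxb : x < b)
    (hg : ContinuousOn g (Icc a b \ {x})) (hΦ : ContinuousOn Φ (Icc a b))
    (hderiv : ∀ t ∈ Ioo a b, t ≠ x → HasDerivAt (fun s => Φ s + c * log (s - x)) (g t) t) :
    Tendsto (fun ε => ∫ t in {t | ε < |t - x|} ∩ Icc a b, g t) (𝓝[>] 0)
      (𝓝 ((Φ b + c * log (b - x)) - (Φ a + c * log (a - x)))) := by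
  set G := fun s => Φ s + c * log (s - x)
  have hG : ContinuousOn G (Icc a b \ {x}) :=
    (hΦ.mono sdiff_subset).add <| continuousOn_const.mul <|
      (continuousOn_id.sub continuousOn_const).log fun t ht => sub_ne_zero.2 ht.2
  have hΦx : ContinuousAt Φ x := hΦ.continuousAt (Icc_mem_nhds hax hxb)
  have hlim := ((hΦx.tendsto.comp (tendsto_sub_nhdsGT x)).sub
    (hΦx.tendsto.comp (tendsto_add_nhdsGT x))).add_const (G b - G a)
  rw [sub_self, zero_add] at hlim
  refine hlim.congr' ?_
  filter_upwards [Ioo_mem_nhdsGT (lt_min (sub_pos.2 hax) (sub_pos.2 hxb))] with ε ⟨hε, hεx⟩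
  obtain ⟨hεa, hεb⟩ := lt_min_iff.1 hεx
  have hleft : Icc a (x - ε) ⊆ Icc a b \ {x} := fun t ht =>
    ⟨⟨ht.1, by linarith [ht.2]⟩, fun h => by linarith [ht.2, mem_singleton_iff.1 h]⟩
  have hright : Icc (x + ε) b ⊆ Icc a b \ {x} := fun t ht =>
    ⟨⟨by linarith [ht.1], ht.2⟩, fun h => by linarith [ht.1, mem_singleton_iff.1 h]⟩
  have hdisj : Disjoint (Ico a (x - ε)) (Ioc (x + ε) b) :=
    disjoint_left.2 fun t h₁ h₂ => by linarith [h₁.2, h₂.1]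
  rw [setOf_lt_abs_sub_inter_Icc hε.le hax.le hxb.le, setIntegral_union hdisj measurableSet_Ioc
      ((hg.mono hleft).integrableOn_Icc.mono_set Ico_subset_Icc_self)
      ((hg.mono hright).integrableOn_Icc.mono_set Ioc_subset_Icc_self),
    setIntegral_eq_sub_of_hasDerivAt (by linarith) Ioo_subset_Ico_self Ico_subset_Icc_self
      (hg.mono hleft) (hG.mono hleft)
      (fun t ht => hderiv t ⟨ht.1, by linarith [ht.2]⟩ (by linarith [ht.2] : t < x).ne),
    setIntegral_eq_sub_of_hasDerivAt (by linarith) Ioo_subset_Ioc_self Ioc_subset_Icc_self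
      (hg.mono hright) (hG.mono hright)
      (fun t ht => hderiv t ⟨by linarith [ht.1], ht.2⟩ (by linarith [ht.1] : x < t).ne')]
  -- `log` is even, so the singular terms at `x ± ε` cancel
  have hlog : log (x - ε - x) = log (x + ε - x) := by
    rw [show x - ε - x = -(x + ε - x) by ring, log_neg_eq_log]
  simp only [G, Function.comp_apply, hlog]
  ring

theorem tendsto_setIntegral_abs_sub_gt_of_le (hab : a < b) (hbx : b ≤ x)
    (hg : ContinuousOn g (Icc a b \ {x})) (hF : ContinuousOn F (Icc a b))
    (hderiv : ∀ t ∈ Ioo a b, HasDerivAt F (g t) t) :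
    Tendsto (fun ε => ∫ t in {t | ε < |t - x|} ∩ Icc a b, g t) (𝓝[>] 0) (𝓝 (F b - F a)) := by
  have hmem : ∀ᶠ ε in 𝓝[>] 0, ε ∈ Ioo 0 (x - a) := Ioo_mem_nhdsGT (by linarith)
  have hc : Tendsto (fun ε => min b (x - ε)) (𝓝[>] 0) (𝓝[Icc a b] b) := by
    refine tendsto_nhdsWithin_iff.2 ⟨?_, hmem.mono fun ε hε => ⟨le_min hab.le ?_, min_le_left _ _⟩⟩
    · simpa [min_eq_left hbx] using (tendsto_const_nhds (x := b)).min (tendsto_sub_nhdsGT x)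
    · linarith [hε.2]
  refine (((hF b ⟨hab.le, le_rfl⟩).tendsto.comp hc).sub_const (F a)).congr' ?_
  filter_upwards [hmem] with ε ⟨hε, hεx⟩
  have hsub : Icc a (min b (x - ε)) ⊆ Icc a b \ {x} := fun t ht =>
    ⟨⟨ht.1, ht.2.trans (min_le_left _ _)⟩,
      fun h => by linarith [ht.2.trans (min_le_right _ _), mem_singleton_iff.1 h]⟩
  refine (setIntegral_eq_sub_of_hasDerivAt (le_min hab.le (by linarith)) ?_ ?_ (hg.mono hsub)
    (hF.mono fun t ht => (hsub ht).1)
    (fun t ht => hderiv t ⟨ht.1, ht.2.trans_le (min_le_left _ _)⟩)).symm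
  · intro t ⟨h₁, h₂⟩
    obtain ⟨h₂b, h₂x⟩ := lt_min_iff.1 h₂
    exact ⟨by rw [mem_ofPred_eq, lt_abs]; right; linarith, h₁.le, h₂b.le⟩
  · rintro t ⟨ht, h₁, h₂⟩
    rw [mem_ofPred_eq, lt_abs] at ht
    exact ⟨h₁, le_min h₂ (by rcases ht with h | h <;> linarith)⟩

end PrincipalValue

theorem sqrt_max_zero (y : ℝ) : √(max y 0) = √y := by
  rcases le_total y 0 with h | h
  · rw [max_eq_right h, sqrt_zero, sqrt_eq_zero'.2 h]
  · rw [max_eq_left h]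

theorem semicircK_eq (t : ℝ) : semicircK t = 1 / (2 * π) * √(4 - t ^ 2) := by
  rw [semicircK, sqrt_max_zero]

theorem semicircK_neg (t : ℝ) : semicircK (-t) = semicircK t := by
  simp [semicircK_eq]

theorem semicircHK_neg (x : ℝ) : semicircHK (-x) = -semicircHK x := by
  simp only [semicircHK, Real.sign_neg, neg_sq]
  ring

-- For `x < 2` the square root below is `0` by the convention `√y = 0` for `y ≤ 0`.
theorem semicircHK_of_nonneg {x : ℝ} (hx : 0 ≤ x) :
    semicircHK x = 1 / (2 * π ^ 2) * (π * (-x + √(x ^ 2 - 4))) := by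
  have hsign : Real.sign x * √(x ^ 2 - 4) = √(x ^ 2 - 4) := by
    rcases hx.eq_or_lt with rfl | hx
    · norm_num
    · rw [Real.sign_of_pos hx, one_mul]
  rw [semicircHK, sqrt_max_zero, hsign]
  field_simp

theorem truncatedHilbert_semicircK (x ε : ℝ) :
    truncatedHilbert semicircK x ε
      = 1 / (2 * π ^ 2) * ∫ t in {t | ε < |t - x|} ∩ Icc (-2) 2, √(4 - t ^ 2) / (t - x) := by
  have hzero : ∀ t ∈ {t | ε < |t - x|} \ ({t | ε < |t - x|} ∩ Icc (-2) 2),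
      semicircK t / (t - x) = 0 := by
    rintro t ⟨hS, ht⟩
    have ht : 4 - t ^ 2 ≤ 0 := by
      have ht : t ∉ Icc (-2 : ℝ) 2 := fun h => ht ⟨hS, h⟩
      simp only [mem_Icc, not_and_or, not_le] at ht
      rcases ht with h | h <;> nlinarith
    rw [semicircK_eq, sqrt_eq_zero'.2 ht, mul_zero, zero_div]
  rw [truncatedHilbert, setIntegral_eq_of_subset_of_forall_sdiff_eq_zero
    (measurableSet_lt measurable_const (by fun_prop)) inter_subset_left hzero]
  simp_rw [semicircK_eq, mul_div_assoc, integral_const_mul]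
  field_simp

theorem continuousOn_sqrt_four_sub_sq_div_sub (x : ℝ) (s : Set ℝ) :
    ContinuousOn (fun t => √(4 - t ^ 2) / (t - x)) (s \ {x}) :=
  ContinuousOn.div (by fun_prop) (by fun_prop) fun _ ht => sub_ne_zero.2 ht.2

theorem sqrt_four_sub_sq_div_sub_eq {x t : ℝ} (ht : t ^ 2 < 4) (hxt : t ≠ x) :
    √(4 - t ^ 2) / (t - x) = -(t + x) / √(4 - t ^ 2) + (4 - x ^ 2) / ((t - x) * √(4 - t ^ 2)) := by
  have hu : √(4 - t ^ 2) ≠ 0 := (sqrt_pos.2 (by linarith)).ne'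
  have hu2 : √(4 - t ^ 2) ^ 2 = 4 - t ^ 2 := sq_sqrt (by linarith)
  have htx : t - x ≠ 0 := sub_ne_zero.2 hxt
  field_simp
  linear_combination hu2

theorem HasDerivAt.arcsin {f : ℝ → ℝ} {f' t : ℝ} (hf : HasDerivAt f f' t) (h₁ : f t ≠ -1)
    (h₂ : f t ≠ 1) : HasDerivAt (fun s => arcsin (f s)) (f' / √(1 - f t ^ 2)) t := by
  rw [div_eq_inv_mul, ← one_div]
  exact (hasDerivAt_arcsin h₁ h₂).comp t hf

noncomputable def semicircPrim (x t : ℝ) : ℝ := √(4 - t ^ 2) - x * arcsin (t / 2)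

theorem continuous_semicircPrim (x : ℝ) : Continuous (semicircPrim x) := by
  unfold semicircPrim
  fun_prop

theorem hasDerivAt_semicircPrim (x : ℝ) {t : ℝ} (ht : t ∈ Ioo (-2 : ℝ) 2) :
    HasDerivAt (semicircPrim x) (-(t + x) / √(4 - t ^ 2)) t := by
  obtain ⟨h₁, h₂⟩ := ht
  have hpos : 0 < 4 - t ^ 2 := by nlinarith
  have hu : √(4 - t ^ 2) ≠ 0 := (sqrt_pos.2 hpos).ne'
  have hsqrt : HasDerivAt (fun t => √(4 - t ^ 2)) (-(2 * t) / (2 * √(4 - t ^ 2))) t := by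
    simpa using ((hasDerivAt_pow 2 t).const_sub 4).sqrt hpos.ne'
  have harcsin : HasDerivAt (fun t => arcsin (t / 2)) (1 / 2 / √(1 - (t / 2) ^ 2)) t :=
    ((hasDerivAt_id t).div_const 2).arcsin (by intro h; simp at h; linarith)
      (by intro h; simp at h; linarith)
  have hhalf : √(1 - (t / 2) ^ 2) = √(4 - t ^ 2) / 2 := by
    rw [show 1 - (t / 2) ^ 2 = (4 - t ^ 2) / 2 ^ 2 by ring, sqrt_div' _ (by norm_num),
      sqrt_sq two_pos.le]
  refine (hsqrt.sub (harcsin.const_mul x)).congr_deriv ?_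
  rw [hhalf]
  field_simp
  ring

theorem semicircPrim_two_sub (x : ℝ) : semicircPrim x 2 - semicircPrim x (-2) = -(π * x) := by
  simp [semicircPrim, show (-2 : ℝ) / 2 = -1 by norm_num]
  ring

noncomputable def semicircLogArg (x t : ℝ) : ℝ := 4 - x * t + √(4 - x ^ 2) * √(4 - t ^ 2)

theorem semicircLogArg_pos {x t : ℝ} (hx : x ∈ Ioo (-2 : ℝ) 2) (ht : t ∈ Icc (-2 : ℝ) 2) :
    0 < semicircLogArg x t := by
  obtain ⟨hx₁, hx₂⟩ := hx
  obtain ⟨ht₁, ht₂⟩ := ht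
  have hxt : x * t < 4 := by nlinarith [sq_nonneg (x - t)]
  have : 0 ≤ √(4 - x ^ 2) * √(4 - t ^ 2) := by positivity
  unfold semicircLogArg
  linarith

theorem hasDerivAt_log_sub_sub_log_semicircLogArg {x t : ℝ} (hx : x ∈ Ioo (-2 : ℝ) 2)
    (ht : t ∈ Ioo (-2 : ℝ) 2) (hxt : t ≠ x) :
    HasDerivAt (fun s => log (s - x) - log (semicircLogArg x s))
      (√(4 - x ^ 2) / ((t - x) * √(4 - t ^ 2))) t := by
  have hN := semicircLogArg_pos hx (Ioo_subset_Icc_self ht)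
  obtain ⟨ht₁, ht₂⟩ := ht
  have hpos : 0 < 4 - t ^ 2 := by nlinarith
  have hu : √(4 - t ^ 2) ≠ 0 := (sqrt_pos.2 hpos).ne'
  have hu2 : √(4 - t ^ 2) ^ 2 = 4 - t ^ 2 := sq_sqrt hpos.le
  have hs2 : √(4 - x ^ 2) ^ 2 = 4 - x ^ 2 := sq_sqrt (by nlinarith [hx.1, hx.2])
  have htx : t - x ≠ 0 := sub_ne_zero.2 hxt
  have hsqrt : HasDerivAt (fun t => √(4 - t ^ 2)) (-(2 * t) / (2 * √(4 - t ^ 2))) t := by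
    simpa using ((hasDerivAt_pow 2 t).const_sub 4).sqrt hpos.ne'
  have hlogArg : HasDerivAt (semicircLogArg x)
      (-(x * 1) + √(4 - x ^ 2) * (-(2 * t) / (2 * √(4 - t ^ 2)))) t :=
    (((hasDerivAt_id' t).const_mul x).const_sub 4).add (hsqrt.const_mul (√(4 - x ^ 2)))
  refine (((hasDerivAt_id' t).sub_const x).log htx |>.sub (hlogArg.log hN.ne')).congr_deriv ?_
  have hNdef : semicircLogArg x t = 4 - x * t + √(4 - x ^ 2) * √(4 - t ^ 2) := rfl
  generalize semicircLogArg x t = N at hN hNdef ⊢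
  field_simp [hN.ne']
  linear_combination (√(4 - t ^ 2) - √(4 - x ^ 2)) * hNdef + √(4 - x ^ 2) * hu2 - √(4 - t ^ 2) * hs2

noncomputable def semicircArcArg (x t : ℝ) : ℝ := (4 - x * t) / (2 * (x - t))

theorem one_sub_semicircArcArg_sq {x t : ℝ} (hxt : x ≠ t) :
    1 - semicircArcArg x t ^ 2 = (x ^ 2 - 4) * (4 - t ^ 2) / (2 * (x - t)) ^ 2 := by
  have : x - t ≠ 0 := sub_ne_zero.2 hxt
  unfold semicircArcArg
  field_simp
  ring

theorem hasDerivAt_arcsin_semicircArcArg {x t : ℝ} (hx : 2 < x) (ht : t ∈ Ioo (-2 : ℝ) 2) :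
    HasDerivAt (fun s => arcsin (semicircArcArg x s))
      (√(x ^ 2 - 4) / ((t - x) * √(4 - t ^ 2))) t := by
  obtain ⟨ht₁, ht₂⟩ := ht
  have hxt : 0 < x - t := by linarith
  have hr : 0 < x ^ 2 - 4 := by nlinarith
  have hu : 0 < 4 - t ^ 2 := by nlinarith
  have hxt' : x ≠ t := by linarith
  have hsq : √(1 - semicircArcArg x t ^ 2) = √(x ^ 2 - 4) * √(4 - t ^ 2) / (2 * (x - t)) := by
    rw [one_sub_semicircArcArg_sq hxt', sqrt_div' _ (by positivity), sqrt_sq (by positivity),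
      sqrt_mul hr.le]
  have hlt : 0 < 1 - semicircArcArg x t ^ 2 := by
    rw [one_sub_semicircArcArg_sq hxt']
    positivity
  have hne : ∀ c : ℝ, c ^ 2 = 1 → semicircArcArg x t ≠ c := fun c hc h => by
    rw [h, hc] at hlt
    simp at hlt
  have hw : HasDerivAt (semicircArcArg x) ((-(x * 1) * (2 * (x - t)) - (4 - x * t) * (2 * -1))
      / (2 * (x - t)) ^ 2) t :=
    (((hasDerivAt_id' t).const_mul x).const_sub 4).div
      (((hasDerivAt_id' t).const_sub x).const_mul 2) (by positivity)
  refine (hw.arcsin (hne _ (by norm_num)) (hne _ (by norm_num))).congr_deriv ?_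
  have hr2 : √(x ^ 2 - 4) ^ 2 = x ^ 2 - 4 := sq_sqrt hr.le
  have hr0 : √(x ^ 2 - 4) ≠ 0 := (sqrt_pos.2 hr).ne'
  have hu0 : √(4 - t ^ 2) ≠ 0 := (sqrt_pos.2 hu).ne'
  have htx : t - x ≠ 0 := by linarith
  rw [hsq]
  field_simp
  linear_combination (t - x) * hr2

theorem tendsto_integral_sqrt_div_sub_of_mem_Ioo {x : ℝ} (hx : x ∈ Ioo (-2 : ℝ) 2) :
    Tendsto (fun ε => ∫ t in {t | ε < |t - x|} ∩ Icc (-2) 2, √(4 - t ^ 2) / (t - x)) (𝓝[>] 0)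
      (𝓝 (-(π * x))) := by
  set s := √(4 - x ^ 2)
  have hs2 : s * s = 4 - x ^ 2 := mul_self_sqrt (by nlinarith [hx.1, hx.2])
  have hΦ : ContinuousOn (fun t => semicircPrim x t - s * log (semicircLogArg x t)) (Icc (-2) 2) :=
    (continuous_semicircPrim x).continuousOn.sub <| continuousOn_const.mul <|
      ContinuousOn.log (by unfold semicircLogArg; fun_prop) fun t ht =>
        (semicircLogArg_pos hx ht).ne'
  have hderiv : ∀ t ∈ Ioo (-2 : ℝ) 2, t ≠ x → HasDerivAt
      (fun t => (semicircPrim x t - s * log (semicircLogArg x t)) + s * log (t - x))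
      (√(4 - t ^ 2) / (t - x)) t := by
    intro t ht hxt
    refine (((hasDerivAt_semicircPrim x ht).add ((hasDerivAt_log_sub_sub_log_semicircLogArg hx ht
      hxt).const_mul s)).congr_deriv ?_).congr_of_eventuallyEq (.of_forall fun t => ?_)
    · rw [sqrt_four_sub_sq_div_sub_eq (by nlinarith [ht.1, ht.2]) hxt, ← mul_div_assoc, hs2]
    · simp only [Pi.add_apply]
      ring
  convert tendsto_setIntegral_abs_sub_gt_of_log_singularity hx.1 hx.2
    (continuousOn_sqrt_four_sub_sq_div_sub x _) hΦ hderiv using 2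
  have hlogArg₁ : semicircLogArg x 2 = 2 * (2 - x) := by norm_num [semicircLogArg]; ring
  have hlogArg₂ : semicircLogArg x (-2) = 2 * (2 + x) := by norm_num [semicircLogArg]; ring
  rw [hlogArg₁, hlogArg₂, show -2 - x = -(2 + x) by ring, log_neg_eq_log,
    log_mul two_ne_zero (by linarith [hx.2]), log_mul two_ne_zero (by linarith [hx.1]),
    ← semicircPrim_two_sub x]
  ring

theorem tendsto_integral_sqrt_div_sub_two :
    Tendsto (fun ε => ∫ t in {t | ε < |t - 2|} ∩ Icc (-2) 2, √(4 - t ^ 2) / (t - 2)) (𝓝[>] 0)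
      (𝓝 (-(π * 2))) := by
  rw [← semicircPrim_two_sub]
  refine tendsto_setIntegral_abs_sub_gt_of_le (by norm_num) le_rfl
    (continuousOn_sqrt_four_sub_sq_div_sub 2 _)
    (continuous_semicircPrim 2).continuousOn fun t ht => ?_
  refine (hasDerivAt_semicircPrim 2 ht).congr_deriv ?_
  rw [sqrt_four_sub_sq_div_sub_eq (by nlinarith [ht.1, ht.2]) ht.2.ne]
  norm_num

theorem tendsto_integral_sqrt_div_sub_of_two_lt {x : ℝ} (hx : 2 < x) :
    Tendsto (fun ε => ∫ t in {t | ε < |t - x|} ∩ Icc (-2) 2, √(4 - t ^ 2) / (t - x)) (𝓝[>] 0)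
      (𝓝 (π * (-x + √(x ^ 2 - 4)))) := by
  set r := √(x ^ 2 - 4)
  have hr2 : r * r = x ^ 2 - 4 := mul_self_sqrt (by nlinarith)
  have hF : ContinuousOn (fun t => semicircPrim x t - r * arcsin (semicircArcArg x t))
      (Icc (-2) 2) := by
    refine (continuous_semicircPrim x).continuousOn.sub <| continuousOn_const.mul <|
      continuous_arcsin.comp_continuousOn <| ContinuousOn.div (by fun_prop) (by fun_prop) ?_
    exact fun t ht => mul_ne_zero two_ne_zero (by linarith [ht.2] : 0 < x - t).ne'
  have harcArg₁ : semicircArcArg x 2 = -1 := by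
    rw [semicircArcArg, div_eq_iff (by linarith)]
    ring
  have harcArg₂ : semicircArcArg x (-2) = 1 := by
    rw [semicircArcArg, div_eq_iff (by linarith)]
    ring
  have hvalue : π * (-x + r) = (semicircPrim x 2 - r * arcsin (semicircArcArg x 2))
      - (semicircPrim x (-2) - r * arcsin (semicircArcArg x (-2))) := by
    rw [sub_sub_sub_comm, semicircPrim_two_sub, harcArg₁, harcArg₂, arcsin_neg_one, arcsin_one]
    ring
  rw [hvalue]
  refine tendsto_setIntegral_abs_sub_gt_of_le (by norm_num) hx.le
    (continuousOn_sqrt_four_sub_sq_div_sub x _)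
    hF fun t ht => ((hasDerivAt_semicircPrim x ht).sub
      ((hasDerivAt_arcsin_semicircArcArg hx ht).const_mul r)).congr_deriv ?_
  rw [sqrt_four_sub_sq_div_sub_eq (by nlinarith [ht.1, ht.2]) (by linarith [ht.2]),
    ← mul_div_assoc, hr2]
  ring

/-- the Hilbert transform (principal value) of the semicircular kernel equals
`semicircHK` at every real point. -/
theorem hilbert_transform_semicircular_kernel :
    ∀ x : ℝ,
      Tendsto (fun ε : ℝ => (1 / Real.pi) * ∫ t in {t : ℝ | ε < |t - x|}, semicircK t / (t - x))
        (nhdsWithin 0 (Set.Ioi 0)) (nhds (semicircHK x)) := by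
  intro x
  change Tendsto (truncatedHilbert semicircK x) _ _
  wlog hx : 0 ≤ x generalizing x with h
  · rw [← neg_neg x, funext (truncatedHilbert_neg semicircK_neg (-x)), semicircHK_neg]
    exact (h (-x) (by linarith)).neg
  rw [funext (truncatedHilbert_semicircK x), semicircHK_of_nonneg hx]
  refine Tendsto.const_mul _ ?_
  rcases lt_trichotomy x 2 with hx2 | rfl | hx2
  · rw [sqrt_eq_zero'.2 (by nlinarith), add_zero, mul_neg]
    exact tendsto_integral_sqrt_div_sub_of_mem_Ioo ⟨by linarith, hx2⟩
  · norm_num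
    exact tendsto_integral_sqrt_div_sub_two
  · exact tendsto_integral_sqrt_div_sub_of_two_lt hx2
end

section
/- For any Stieltjes transform t(z) = ∫ dρ(λ)/(λ−z) of a finite positive measure ρ on ℝ, and any fixed x ∈ ℝ, the function y ↦ y·|t(x + iy)| is nondecreasing on (0, ∞). -/
open MeasureTheory Set Complex

/-!
Write `r_y(l) = (l - (x + iy))⁻¹`. The resolvent identity gives
`‖r_{y₁}(l) - r_{y₂}(l)‖ = (y₂ - y₁) ‖r_{y₁}(l)‖ ‖r_{y₂}(l)‖`, and `y ↦ y ‖r_y(l)‖ = y / √((l-x)² + y²)`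
is nondecreasing, while `Im r_y(l) = y ‖r_y(l)‖²`. Hence, for `y₁ ≤ y₂`, pointwise
`y₁ ‖r_{y₁} - r_{y₂}‖ ≤ (y₂ - y₁) Im r_{y₂}`; integrating against `ρ`,
`y₁ ‖t₁ - t₂‖ ≤ (y₂ - y₁) Im t₂ ≤ (y₂ - y₁) ‖t₂‖`, and the triangle inequality gives
`y₁ ‖t₁‖ ≤ y₂ ‖t₂‖`.
-/

lemma norm_inv_sub_inv {𝕜 : Type*} [NormedField 𝕜] {a b : 𝕜} (ha : a ≠ 0) (hb : b ≠ 0) :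
    ‖a⁻¹ - b⁻¹‖ = ‖a - b‖ * (‖a⁻¹‖ * ‖b⁻¹‖) := by
  rw [inv_sub_inv ha hb, norm_div, norm_mul, norm_sub_rev, norm_inv, norm_inv, div_eq_mul_inv,
    mul_inv]

namespace Complex

lemma ofReal_sub_ne_zero {z : ℂ} (hz : z.im ≠ 0) (l : ℝ) : (l : ℂ) - z ≠ 0 := by
  intro h
  simpa [hz] using congrArg im h

lemma norm_inv_ofReal_sub_le {z : ℂ} (hz : z.im ≠ 0) (l : ℝ) :
    ‖((l : ℂ) - z)⁻¹‖ ≤ |z.im|⁻¹ := by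
  rw [norm_inv]
  refine inv_anti₀ (abs_pos.mpr hz) ?_
  simpa using abs_im_le_norm ((l : ℂ) - z)

lemma sq_norm_inv_ofReal_sub (z : ℂ) (l : ℝ) :
    ‖((l : ℂ) - z)⁻¹‖ ^ 2 = ((l - z.re) ^ 2 + z.im ^ 2)⁻¹ := by
  rw [norm_inv, inv_pow, Complex.sq_norm, normSq_apply]
  simp only [sub_re, ofReal_re, sub_im, ofReal_im, zero_sub]
  ring

lemma im_inv_ofReal_sub (z : ℂ) (l : ℝ) :
    (((l : ℂ) - z)⁻¹).im = z.im * ‖((l : ℂ) - z)⁻¹‖ ^ 2 := by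
  rw [inv_im, norm_inv, inv_pow, Complex.sq_norm]
  simp [div_eq_mul_inv]

lemma monotoneOn_mul_norm_inv_ofReal_sub (x l : ℝ) :
    MonotoneOn (fun y : ℝ => y * ‖((l : ℂ) - (x + y * I))⁻¹‖) (Ioi 0) := by
  intro y₁ hy₁ y₂ hy₂ h
  simp only [mem_Ioi] at hy₁ hy₂
  refine (pow_le_pow_iff_left₀ (by positivity) (by positivity) two_ne_zero).mp ?_
  simp only [mul_pow, sq_norm_inv_ofReal_sub, add_re, ofReal_re, mul_re, I_re, mul_zero, ofReal_im,
    I_im, mul_one, sub_zero, add_im, mul_im, zero_add, add_zero]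
  rw [← div_eq_mul_inv, ← div_eq_mul_inv, div_le_div_iff₀ (by positivity) (by positivity)]
  nlinarith [mul_le_mul_of_nonneg_right (pow_le_pow_left₀ hy₁.le h 2) (sq_nonneg (l - x))]

lemma mul_norm_inv_ofReal_sub_sub_le (x l : ℝ) {y₁ y₂ : ℝ} (hy₁ : 0 < y₁) (h : y₁ ≤ y₂) :
    y₁ * ‖((l : ℂ) - (x + y₁ * I))⁻¹ - ((l : ℂ) - (x + y₂ * I))⁻¹‖
      ≤ (y₂ - y₁) * (((l : ℂ) - (x + y₂ * I))⁻¹).im := by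
  have hy₂ : 0 < y₂ := hy₁.trans_le h
  have hdist : ‖((l : ℂ) - (x + y₁ * I)) - ((l : ℂ) - (x + y₂ * I))‖ = y₂ - y₁ := by
    rw [show ((l : ℂ) - (x + y₁ * I)) - ((l : ℂ) - (x + y₂ * I)) = ((y₂ - y₁ : ℝ) : ℂ) * I by
      push_cast; ring, norm_mul, norm_I, mul_one, norm_real, Real.norm_of_nonneg (sub_nonneg.2 h)]
  have hmono := monotoneOn_mul_norm_inv_ofReal_sub x l hy₁ hy₂ h
  rw [norm_inv_sub_inv (ofReal_sub_ne_zero (by simpa using hy₁.ne') l)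
    (ofReal_sub_ne_zero (by simpa using hy₂.ne') l), hdist, im_inv_ofReal_sub]
  set r₁ := ‖((l : ℂ) - (x + y₁ * I))⁻¹‖
  set r₂ := ‖((l : ℂ) - (x + y₂ * I))⁻¹‖
  calc y₁ * ((y₂ - y₁) * (r₁ * r₂)) = (y₂ - y₁) * (y₁ * r₁ * r₂) := by ring
    _ ≤ (y₂ - y₁) * (y₂ * r₂ * r₂) := by gcongr
    _ = (y₂ - y₁) * ((x + y₂ * I).im * r₂ ^ 2) := by
      rw [show (x + y₂ * I).im = y₂ by simp]; ring

end Complex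

noncomputable def stieltjesTransform (ρ : Measure ℝ) (z : ℂ) : ℂ := ∫ l, ((l : ℂ) - z)⁻¹ ∂ρ

section StieltjesTransform

variable (ρ : Measure ℝ) [IsFiniteMeasure ρ]

lemma integrable_inv_ofReal_sub {z : ℂ} (hz : z.im ≠ 0) :
    Integrable (fun l : ℝ => ((l : ℂ) - z)⁻¹) ρ :=
  .of_bound (by fun_prop) |z.im|⁻¹ (ae_of_all _ (norm_inv_ofReal_sub_le hz))

lemma im_stieltjesTransform {z : ℂ} (hz : z.im ≠ 0) :
    (stieltjesTransform ρ z).im = ∫ l, (((l : ℂ) - z)⁻¹).im ∂ρ :=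
  (imCLM.integral_comp_comm (integrable_inv_ofReal_sub ρ hz)).symm

lemma mul_norm_stieltjesTransform_sub_le (x : ℝ) {y₁ y₂ : ℝ} (hy₁ : 0 < y₁) (h : y₁ ≤ y₂) :
    y₁ * ‖stieltjesTransform ρ (x + y₁ * I) - stieltjesTransform ρ (x + y₂ * I)‖
      ≤ (y₂ - y₁) * (stieltjesTransform ρ (x + y₂ * I)).im := by
  have him : ∀ {y : ℝ}, 0 < y → (x + y * I : ℂ).im ≠ 0 := fun hy => by simpa using hy.ne'
  have hint₁ := integrable_inv_ofReal_sub ρ (him hy₁)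
  have hint₂ := integrable_inv_ofReal_sub ρ (him (hy₁.trans_le h))
  rw [im_stieltjesTransform ρ (him (hy₁.trans_le h)), stieltjesTransform, stieltjesTransform,
    ← integral_sub hint₁ hint₂, ← integral_const_mul]
  calc y₁ * ‖∫ l, (((l : ℂ) - (x + y₁ * I))⁻¹ - ((l : ℂ) - (x + y₂ * I))⁻¹) ∂ρ‖
      ≤ ∫ l, y₁ * ‖((l : ℂ) - (x + y₁ * I))⁻¹ - ((l : ℂ) - (x + y₂ * I))⁻¹‖ ∂ρ := by
        rw [integral_const_mul]
        gcongr
        exact norm_integral_le_integral_norm _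
    _ ≤ ∫ l, (y₂ - y₁) * (((l : ℂ) - (x + y₂ * I))⁻¹).im ∂ρ :=
        integral_mono_of_nonneg (ae_of_all _ fun l => by positivity)
          (hint₂.im.const_mul _) (ae_of_all _ fun l => mul_norm_inv_ofReal_sub_sub_le x l hy₁ h)

end StieltjesTransform

/-- for the Stieltjes transform `t(z) = ∫ (λ − z)⁻¹ dρ(λ)` of a finite positive
measure `ρ` on ℝ and any fixed `x ∈ ℝ`, the map `y ↦ y·|t(x + iy)|` is nondecreasing on `(0,∞)`. -/
theorem stieltjes_transform_y_abs_monotone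
    (ρ : Measure ℝ) [IsFiniteMeasure ρ] (x : ℝ) :
    MonotoneOn (fun y : ℝ => y * ‖∫ l : ℝ, ((l : ℂ) - (x + y * Complex.I))⁻¹ ∂ρ‖)
      (Set.Ioi (0 : ℝ)) := by
  intro y₁ hy₁ y₂ _ h
  change y₁ * ‖stieltjesTransform ρ (x + y₁ * I)‖ ≤ y₂ * ‖stieltjesTransform ρ (x + y₂ * I)‖
  set S₁ := stieltjesTransform ρ (x + y₁ * I)
  set S₂ := stieltjesTransform ρ (x + y₂ * I)
  have hdiff : y₁ * ‖S₁ - S₂‖ ≤ (y₂ - y₁) * ‖S₂‖ :=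
    (mul_norm_stieltjesTransform_sub_le ρ x hy₁ h).trans
      (mul_le_mul_of_nonneg_left (im_le_norm _) (sub_nonneg.2 h))
  calc y₁ * ‖S₁‖ ≤ y₁ * (‖S₂‖ + ‖S₁ - S₂‖) :=
        mul_le_mul_of_nonneg_left (norm_le_norm_add_norm_sub' S₁ S₂) (le_of_lt hy₁)
    _ ≤ y₂ * ‖S₂‖ := by linarith
end

section
/- Let S = A − cc' where A is a symmetric p×p real matrix and c ∈ ℝ^p, and let z ∈ ℂ with Im z = η > 0. Then |tr(Σ(A − z)^{-1}) − tr(Σ(S − z)^{-1})| ≤ ‖Σ‖/η for any symmetric positive-semidefinite matrix Σ. -/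
/-!
Write `M = S - z`, `N = A - z = M + cc'` and `v = M⁻¹ c`. By Sherman–Morrison,
`tr(Σ N⁻¹) - tr(Σ M⁻¹) = -(v' Σ v) / (1 + c' v)`, where `1 + c' v = det N / det M ≠ 0`.
As `c` is real and `c = M v`, `c' v = v* (S - z̄) v`, whose imaginary part is `η ‖v‖²`;
hence `|1 + c' v| ≥ η ‖v‖²`, while `|v' Σ v| ≤ ‖Σ‖ ‖v‖²`.
-/

open Matrix WithLp

theorem EuclideanSpace.norm_sq_eq_norm_sq_re_add_norm_sq_im {n : Type*} [Fintype n]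
    (x : n → ℂ) :
    ‖toLp 2 x‖ ^ 2 = ‖toLp 2 (Complex.re ∘ x)‖ ^ 2 + ‖toLp 2 (Complex.im ∘ x)‖ ^ 2 := by
  simp only [EuclideanSpace.norm_sq_eq, ← Finset.sum_add_distrib, Complex.sq_norm,
    Complex.normSq_apply, Function.comp_apply, Real.norm_eq_abs, sq_abs]
  exact Finset.sum_congr rfl fun i _ => by ring

namespace Matrix

variable {n : Type*}

theorem IsSymm.isHermitian_map_ofReal {S : Matrix n n ℝ} (hS : S.IsSymm) :
    (S.map Complex.ofReal).IsHermitian :=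
  (isHermitian_iff_isSymm.mpr hS).map _ fun _ => (Complex.conj_ofReal _).symm

variable [Fintype n]

theorem IsSymm.vecMul_eq_mulVec {α : Type*} [CommSemiring α] {A : Matrix n n α} (hA : A.IsSymm)
    (v : n → α) : v ᵥ* A = A *ᵥ v := by
  rw [← vecMul_transpose, hA.eq]

section ShermanMorrison

variable [DecidableEq n]

theorem det_add_vecMulVec {R : Type*} [CommRing R] {M : Matrix n n R} (hM : IsUnit M.det)
    (a b : n → R) : (M + vecMulVec a b).det = M.det * (1 + b ⬝ᵥ M⁻¹ *ᵥ a) := by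
  rw [vecMulVec_eq Unit, det_add_replicateCol_mul_replicateRow hM, det_unique (n := Unit),
    ← replicateRow_vecMul, add_apply, replicateRow_mul_replicateCol_apply, one_apply_eq,
    dotProduct_mulVec]

theorem one_add_dotProduct_nonsing_inv_mulVec_ne_zero {R : Type*} [CommRing R] [Nontrivial R]
    {M : Matrix n n R} (hM : IsUnit M.det) {a b : n → R} (hMab : IsUnit (M + vecMulVec a b).det) :
    1 + b ⬝ᵥ M⁻¹ *ᵥ a ≠ 0 :=
  right_ne_zero_of_mul (det_add_vecMulVec hM a b ▸ hMab.ne_zero)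

variable {K : Type*} [Field K]

theorem inv_add_vecMulVec {M : Matrix n n K} (hM : IsUnit M.det) (a b : n → K)
    (h : 1 + b ⬝ᵥ M⁻¹ *ᵥ a ≠ 0) :
    (M + vecMulVec a b)⁻¹
      = M⁻¹ - (1 + b ⬝ᵥ M⁻¹ *ᵥ a)⁻¹ • vecMulVec (M⁻¹ *ᵥ a) (b ᵥ* M⁻¹) := by
  refine inv_eq_right_inv ?_
  have hMa : M *ᵥ (M⁻¹ *ᵥ a) = a := by rw [mulVec_mulVec, mul_nonsing_inv _ hM, one_mulVec]
  have hcoeff : (1 + b ⬝ᵥ M⁻¹ *ᵥ a)⁻¹ * (b ⬝ᵥ M⁻¹ *ᵥ a) = 1 - (1 + b ⬝ᵥ M⁻¹ *ᵥ a)⁻¹ := by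
    field_simp
    ring
  rw [add_mul, mul_sub, mul_sub, mul_nonsing_inv _ hM, Matrix.mul_smul, Matrix.mul_smul,
    mul_vecMulVec, hMa, vecMulVec_mul_vecMulVec, vecMulVec_mul, vecMulVec_smul, smul_smul,
    hcoeff, sub_smul, one_smul]
  abel

theorem trace_mul_inv_add_vecMulVec_sub (B : Matrix n n K) {M : Matrix n n K}
    (hM : IsUnit M.det) (a b : n → K) (h : 1 + b ⬝ᵥ M⁻¹ *ᵥ a ≠ 0) :
    (B * (M + vecMulVec a b)⁻¹).trace - (B * M⁻¹).trace
      = -((b ᵥ* M⁻¹) ⬝ᵥ B *ᵥ (M⁻¹ *ᵥ a)) / (1 + b ⬝ᵥ M⁻¹ *ᵥ a) := by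
  rw [inv_add_vecMulVec hM a b h, mul_sub, trace_sub, Matrix.mul_smul, trace_smul,
    mul_vecMulVec, trace_vecMulVec, smul_eq_mul, dotProduct_comm (B *ᵥ _)]
  ring

end ShermanMorrison

section RCLike

variable {𝕜 : Type*} [RCLike 𝕜]

theorem star_dotProduct_self_eq_norm_sq (v : n → 𝕜) :
    star v ⬝ᵥ v = (‖toLp 2 v‖ : 𝕜) ^ 2 := by
  rw [← inner_self_eq_norm_sq_to_K, EuclideanSpace.inner_toLp_toLp, dotProduct_comm]

theorem norm_dotProduct_le (v w : n → 𝕜) : ‖v ⬝ᵥ w‖ ≤ ‖toLp 2 v‖ * ‖toLp 2 w‖ := by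
  have h := norm_inner_le_norm (𝕜 := 𝕜) (toLp 2 (star v)) (toLp 2 w)
  have hstar : ‖toLp 2 (star v)‖ = ‖toLp 2 v‖ := by simp [EuclideanSpace.norm_eq]
  rwa [EuclideanSpace.inner_toLp_toLp, star_star, dotProduct_comm, hstar] at h

variable [DecidableEq n]

theorem IsHermitian.im_star_dotProduct_sub_smul_one_mulVec {H : Matrix n n 𝕜}
    (hH : H.IsHermitian) (z : 𝕜) (v : n → 𝕜) :
    RCLike.im (star v ⬝ᵥ (H - z • 1) *ᵥ v) = -RCLike.im z * ‖toLp 2 v‖ ^ 2 := by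
  rw [sub_mulVec, smul_mulVec, one_mulVec, dotProduct_sub, dotProduct_smul, map_sub,
    hH.im_star_dotProduct_mulVec_self, star_dotProduct_self_eq_norm_sq, smul_eq_mul]
  norm_cast
  simp

theorem IsHermitian.isUnit_det_sub_smul_one {H : Matrix n n 𝕜} (hH : H.IsHermitian) {z : 𝕜}
    (hz : RCLike.im z ≠ 0) : IsUnit (H - z • 1).det := by
  rw [isUnit_iff_ne_zero]
  intro hdet
  obtain ⟨v, hv0, hv⟩ := exists_mulVec_eq_zero_iff.mpr hdet
  have him := hH.im_star_dotProduct_sub_smul_one_mulVec z v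
  rw [hv, dotProduct_zero, map_zero, zero_eq_mul] at him
  rcases him with hzero | hv
  · exact hz (neg_eq_zero.mp hzero)
  · exact hv0 (by simpa using hv)

theorem IsHermitian.im_star_dotProduct_inv_sub_smul_one_mulVec {H : Matrix n n 𝕜}
    (hH : H.IsHermitian) {z : 𝕜} (hz : RCLike.im z ≠ 0) (c : n → 𝕜) :
    RCLike.im (star c ⬝ᵥ (H - z • 1)⁻¹ *ᵥ c)
      = RCLike.im z * ‖toLp 2 ((H - z • 1)⁻¹ *ᵥ c)‖ ^ 2 := by
  set v := (H - z • 1)⁻¹ *ᵥ c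
  have hc : (H - z • 1) *ᵥ v = c := by
    rw [mulVec_mulVec, mul_nonsing_inv _ (hH.isUnit_det_sub_smul_one hz), one_mulVec]
  rw [← hc, ← star_star v, star_dotProduct_star, star_star, RCLike.star_def, RCLike.conj_im,
    hH.im_star_dotProduct_sub_smul_one_mulVec, neg_mul, neg_neg]

theorem norm_dotProduct_mulVec_le (B : Matrix n n 𝕜) (v : n → 𝕜) :
    ‖v ⬝ᵥ B *ᵥ v‖ ≤ ‖toEuclideanCLM (n := n) (𝕜 := 𝕜) B‖ * ‖toLp 2 v‖ ^ 2 :=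
  calc ‖v ⬝ᵥ B *ᵥ v‖ ≤ ‖toLp 2 v‖ * ‖toLp 2 (B *ᵥ v)‖ := norm_dotProduct_le _ _
    _ ≤ ‖toLp 2 v‖ * (‖toEuclideanCLM (n := n) (𝕜 := 𝕜) B‖ * ‖toLp 2 v‖) := by
      gcongr
      exact (toEuclideanCLM (n := n) (𝕜 := 𝕜) B).le_opNorm (toLp 2 v)
    _ = ‖toEuclideanCLM (n := n) (𝕜 := 𝕜) B‖ * ‖toLp 2 v‖ ^ 2 := by ring

end RCLike

theorem norm_toEuclideanCLM_map_ofReal_le [DecidableEq n] (S : Matrix n n ℝ) :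
    ‖toEuclideanCLM (n := n) (𝕜 := ℂ) (S.map (↑))‖ ≤ ‖toEuclideanCLM (n := n) (𝕜 := ℝ) S‖ := by
  refine ContinuousLinearMap.opNorm_le_bound _ (norm_nonneg _) fun x => ?_
  set T := toEuclideanCLM (n := n) (𝕜 := ℝ) S
  have hre : Complex.re ∘ (S.map (↑) *ᵥ x.ofLp) = S *ᵥ (Complex.re ∘ x.ofLp) := by
    ext i
    simp [mulVec, dotProduct, Complex.re_sum]
  have him : Complex.im ∘ (S.map (↑) *ᵥ x.ofLp) = S *ᵥ (Complex.im ∘ x.ofLp) := by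
    ext i
    simp [mulVec, dotProduct, Complex.im_sum]
  refine le_of_pow_le_pow_left₀ two_ne_zero (by positivity) ?_
  calc ‖toEuclideanCLM (n := n) (𝕜 := ℂ) (S.map (↑)) x‖ ^ 2
      = ‖T (toLp 2 (Complex.re ∘ x.ofLp))‖ ^ 2 + ‖T (toLp 2 (Complex.im ∘ x.ofLp))‖ ^ 2 := by
        change ‖toLp 2 (S.map (↑) *ᵥ x.ofLp)‖ ^ 2 = _
        rw [EuclideanSpace.norm_sq_eq_norm_sq_re_add_norm_sq_im, hre, him]
        rfl
    _ ≤ (‖T‖ * ‖toLp 2 (Complex.re ∘ x.ofLp)‖) ^ 2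
          + (‖T‖ * ‖toLp 2 (Complex.im ∘ x.ofLp)‖) ^ 2 := by
        gcongr <;> exact T.le_opNorm _
    _ = (‖T‖ * ‖x‖) ^ 2 := by
        rw [mul_pow, mul_pow, mul_pow, ← mul_add,
          ← EuclideanSpace.norm_sq_eq_norm_sq_re_add_norm_sq_im]

end Matrix

theorem rank_one_resolvent_trace_perturbation_general
    (p : ℕ) (A : Matrix (Fin p) (Fin p) ℝ) (hA : A.IsSymm)
    (c : Fin p → ℝ)
    (Sg : Matrix (Fin p) (Fin p) ℝ)
    (z : ℂ) (η : ℝ) (hη : 0 < η) (hz : z.im = η) :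
    letI S : Matrix (Fin p) (Fin p) ℝ := A - Matrix.vecMulVec c c
    ‖
        ((Sg.map (Complex.ofReal) * (A.map (Complex.ofReal) - z • (1 : Matrix (Fin p) (Fin p) ℂ))⁻¹).trace -
         (Sg.map (Complex.ofReal) * (S.map (Complex.ofReal) - z • (1 : Matrix (Fin p) (Fin p) ℂ))⁻¹).trace)‖
      ≤ ‖Matrix.toEuclideanCLM (𝕜 := ℝ) Sg‖ / η := by
  have hzim : RCLike.im z ≠ 0 := show z.im ≠ 0 by rw [hz]; exact hη.ne'
  set S := A - vecMulVec c c
  have hS : S.IsSymm := hA.sub (transpose_vecMulVec c c)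
  set M := S.map Complex.ofReal - z • (1 : Matrix (Fin p) (Fin p) ℂ)
  set cC : Fin p → ℂ := Complex.ofReal ∘ c
  have hN : A.map Complex.ofReal - z • 1 = M + vecMulVec cC cC := by
    ext i j
    simp only [Matrix.sub_apply, map_apply, Matrix.smul_apply, Matrix.add_apply, M, S, cC,
      vecMulVec_apply, Function.comp_apply, Complex.ofReal_sub, Complex.ofReal_mul]
    ring
  have hMdet : IsUnit M.det := hS.isHermitian_map_ofReal.isUnit_det_sub_smul_one hzim
  have hβ : 1 + cC ⬝ᵥ M⁻¹ *ᵥ cC ≠ 0 := one_add_dotProduct_nonsing_inv_mulVec_ne_zero hMdet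
    (hN ▸ hA.isHermitian_map_ofReal.isUnit_det_sub_smul_one hzim)
  have him : (cC ⬝ᵥ M⁻¹ *ᵥ cC).im = η * ‖toLp 2 (M⁻¹ *ᵥ cC)‖ ^ 2 := by
    have hcC : star cC = cC := funext fun i => Complex.conj_ofReal (c i)
    have h := hS.isHermitian_map_ofReal.im_star_dotProduct_inv_sub_smul_one_mulVec hzim cC
    rw [hcC] at h
    exact hz ▸ h
  have hMsymm : M.IsSymm := (hS.map _).sub (isSymm_one.smul z)
  rw [hN, trace_mul_inv_add_vecMulVec_sub _ hMdet _ _ hβ, hMsymm.inv.vecMul_eq_mulVec, norm_div,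
    norm_neg, div_le_div_iff₀ (norm_pos_iff.mpr hβ) hη]
  calc _ ≤ ‖toEuclideanCLM (𝕜 := ℝ) Sg‖ * ‖toLp 2 (M⁻¹ *ᵥ cC)‖ ^ 2 * η := by
        gcongr
        exact (norm_dotProduct_mulVec_le _ _).trans
          (by gcongr; exact norm_toEuclideanCLM_map_ofReal_le Sg)
    _ = ‖toEuclideanCLM (𝕜 := ℝ) Sg‖ * (1 + cC ⬝ᵥ M⁻¹ *ᵥ cC).im := by
        rw [Complex.add_im, Complex.one_im, zero_add, him]
        ring
    _ ≤ ‖toEuclideanCLM (𝕜 := ℝ) Sg‖ * ‖1 + cC ⬝ᵥ M⁻¹ *ᵥ cC‖ := by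
        gcongr
        exact Complex.im_le_norm _

/-- rank-one resolvent perturbation, Silverstein–Bai: if `S = A − cc'`
with `A` symmetric real and `z = x + iη`, `η > 0`, then for any symmetric PSD `Σ`,
`|tr(Σ(A − z)⁻¹) − tr(Σ(S − z)⁻¹)| ≤ ‖Σ‖/η`. -/
theorem rank_one_resolvent_trace_perturbation
    (p : ℕ) (A : Matrix (Fin p) (Fin p) ℝ) (hA : A.IsSymm)
    (c : Fin p → ℝ)
    (Sg : Matrix (Fin p) (Fin p) ℝ) (hSgsym : Sg.IsSymm) (hSgpsd : Sg.PosSemidef)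
    (z : ℂ) (η : ℝ) (hη : 0 < η) (hz : z.im = η) :
    letI S : Matrix (Fin p) (Fin p) ℝ := A - Matrix.vecMulVec c c
    ‖
        ((Sg.map (Complex.ofReal) * (A.map (Complex.ofReal) - z • (1 : Matrix (Fin p) (Fin p) ℂ))⁻¹).trace -
         (Sg.map (Complex.ofReal) * (S.map (Complex.ofReal) - z • (1 : Matrix (Fin p) (Fin p) ℂ))⁻¹).trace)‖
      ≤ ‖Matrix.toEuclideanCLM (𝕜 := ℝ) Sg‖ / η :=
  rank_one_resolvent_trace_perturbation_general p A hA c Sg z η hη hz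
end
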